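/- Let T be a consistent, recursively axiomatizable extension of Robinson arithmetic Q with standard provability predicate Pr_T(x). If the formula ¬Pr_T(x) has a fixed point in T that is false in the standard model ℕ (i.e., there is a sentence A with T ⊢ A ↔ ¬Pr_T(⌜A⌝) and ℕ ⊭ A), then T is unsound. (Second half of Theorem 2 of Lajevardi–Salehi 2021; the paper emphasizes this is strictly stronger than part (ii) of Bennet–Blanck's Observation 2.) -/

import Mathlib

open FirstOrder FirstOrder.Language

/-- Function symbols of the first-order language of arithmetic: `0`, successor, `+`, `·`. -/
inductive ArithFunc : ℕ → Type
  | zero : ArithFunc 0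
  | succ : ArithFunc 1
  | add : ArithFunc 2
  | mul : ArithFunc 2

/-- Relation symbols of the first-order language of arithmetic: `≤`. -/
inductive ArithRel : ℕ → Type
  | le : ArithRel 2

/-- The first-order language of arithmetic. -/
def arith : Language := ⟨ArithFunc, ArithRel⟩

/-- The standard structure of the natural numbers. -/
instance : arith.Structure ℕ where
  funMap {_} f v :=
    match f with
    | .zero => 0
    | .succ => v 0 + 1
    | .add => v 0 + v 1
    | .mul => v 0 * v 1
  RelMap {_} r v :=
    match r with
    | .le => v 0 ≤ v 1

instance (n : ℕ) : Encodable (ArithFunc n) where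
  encode f := match f with
    | .zero => 0
    | .succ => 0
    | .add => 0
    | .mul => 1
  decode k :=
    match n, k with
    | 0, 0 => some .zero
    | 1, 0 => some .succ
    | 2, 0 => some .add
    | 2, 1 => some .mul
    | _, _ => none
  encodek f := by cases f <;> rfl

instance (n : ℕ) : Encodable (ArithRel n) where
  encode _ := 0
  decode k :=
    match n, k with
    | 2, 0 => some .le
    | _, _ => none
  encodek r := by cases r; rfl

instance : Encodable (Σ n, arith.Functions n) :=
  inferInstanceAs (Encodable (Σ n, ArithFunc n))

instance : Encodable (Σ n, arith.Relations n) :=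
  inferInstanceAs (Encodable (Σ n, ArithRel n))

/-- A (computable) Gödel numbering of the sentences of the language of arithmetic. -/
def code (A : arith.Sentence) : ℕ :=
  Encodable.encode A.listEncode

/-- The term `0`. -/
def zeroT {α : Type} : arith.Term α := Term.func ArithFunc.zero ![]

/-- The successor of a term. -/
def succT {α : Type} (t : arith.Term α) : arith.Term α := Term.func ArithFunc.succ ![t]

/-- The sum of two terms. -/
def addT {α : Type} (t u : arith.Term α) : arith.Term α := Term.func ArithFunc.add ![t, u]

/-- The product of two terms. -/
def mulT {α : Type} (t u : arith.Term α) : arith.Term α := Term.func ArithFunc.mul ![t, u]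

/-- The `≤`-atomic formula between two terms. -/
def leF {k : ℕ} (t u : arith.Term (Empty ⊕ Fin k)) : arith.BoundedFormula Empty k :=
  Relations.boundedFormula₂ ArithRel.le t u

/-- The numeral `n̄` of a natural number `n`: the term `S(S(⋯S(0)⋯))` with `n` successors. -/
def numeral {α : Type} : ℕ → arith.Term α
  | 0 => zeroT
  | n + 1 => succT (numeral n)

/-- Substitution of a closed term for the unique free variable of a formula,
yielding a sentence. -/
def substSingle (φ : arith.BoundedFormula Empty 1) (t : arith.Term Empty) : arith.Sentence :=
  φ.toFormula.subst (Sum.elim (fun e => e.elim) (fun _ => t))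

/-- `φ(⌜A⌝)`: the result of plugging the numeral of the Gödel code of the sentence `A`
into the formula `φ(x)` with one free variable. -/
def applyCode (φ : arith.BoundedFormula Empty 1) (A : arith.Sentence) : arith.Sentence :=
  substSingle φ (numeral (code A))

/-- Provability (by Gödel's completeness theorem, semantic consequence coincides with
first-order provability): `Proves T A` states that `T ⊢ A`. -/
def Proves (T : arith.Theory) (A : arith.Sentence) : Prop := T ⊨ᵇ A

/-- Truth in the standard model ℕ of arithmetic. -/
def TrueInN (A : arith.Sentence) : Prop := ℕ ⊨ A

/-- A theory is consistent iff it does not prove a contradiction. -/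
def Consistent (T : arith.Theory) : Prop := ¬ Proves T ⊥

/-- A theory is sound iff all of its theorems are true in the standard model ℕ. -/
def Sound (T : arith.Theory) : Prop := ∀ A, Proves T A → TrueInN A

/-- A theory is unsound iff some theorem of it is false in the standard model ℕ. -/
def Unsound (T : arith.Theory) : Prop := ∃ A, Proves T A ∧ ¬ TrueInN A

/-- `Extends T S` : the theory `T` proves everything the theory `S` proves. -/
def Extends (T S : arith.Theory) : Prop := ∀ A, Proves S A → Proves T A

/-- A theory is recursively axiomatizable iff it has the same theorems as some theory
whose set of (codes of) axioms is recursive (computable). -/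
def RecursivelyAxiomatizable (T : arith.Theory) : Prop :=
  ∃ Ax : arith.Theory, (∀ A, Proves Ax A ↔ Proves T A) ∧
    ComputablePred (fun n : ℕ => ∃ A ∈ Ax, code A = n)

/-- Robinson arithmetic `Q` (with a defining axiom for `≤`). -/
def RobinsonQ : arith.Theory :=
  { -- ∀x, S x ≠ 0
    ∀' ∼(succT &0 =' zeroT),
    -- ∀x ∀y, S x = S y → x = y
    ∀' ∀' ((succT &0 =' succT &1) ⟹ (&0 =' &1)),
    -- ∀x, x ≠ 0 → ∃y, x = S y
    ∀' (∼(&0 =' zeroT) ⟹ ∃' (&0 =' succT &1)),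
    -- ∀x, x + 0 = x
    ∀' (addT &0 zeroT =' &0),
    -- ∀x ∀y, x + S y = S (x + y)
    ∀' ∀' (addT &0 (succT &1) =' succT (addT &0 &1)),
    -- ∀x, x · 0 = 0
    ∀' (mulT &0 zeroT =' zeroT),
    -- ∀x ∀y, x · S y = x · y + x
    ∀' ∀' (mulT &0 (succT &1) =' addT (mulT &0 &1) &0),
    -- ∀x ∀y, x ≤ y ↔ ∃z, z + x = y
    ∀' ∀' (leF &0 &1 ⇔ ∃' (addT &2 &0 =' &1)) }

/-- The December 2024 Mathlib `FirstOrder.Language.Formula.iAlls` (renaming variables with `f`,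
then universally quantifying over all variables `Sum.inr _`), restored with its old signature. -/
noncomputable def formulaIAllsOld {L : Language} {α β γ : Type*} [Finite γ] (f : α → β ⊕ γ)
    (φ : L.Formula α) : L.Formula β :=
  let e := Classical.choice (Classical.choose_spec (Finite.exists_equiv_fin γ))
  (BoundedFormula.relabel (fun a => Sum.map id e (f a)) φ).alls

/-- The induction axiom for a formula `φ(x, y₁, …, y_k)` (the induction variable is the
last de Bruijn variable): the universal closure of
`[φ(0, ȳ) ∧ ∀x (φ(x, ȳ) → φ(S x, ȳ))] → ∀x φ(x, ȳ)`. -/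
noncomputable def indAx {k : ℕ} (φ : arith.BoundedFormula Empty (k + 1)) : arith.Sentence :=
  let χ : arith.Formula (Fin k ⊕ Fin 1) :=
    φ.toFormula.relabel
      (Sum.elim (fun e => e.elim)
        (fun i => Fin.lastCases (Sum.inr 0) (fun j => Sum.inl j) i))
  let χ0 : arith.Formula (Fin k) :=
    χ.subst (Sum.elim (fun a => Term.var a) (fun _ => zeroT))
  let χS : arith.Formula (Fin k ⊕ Fin 1) :=
    χ.subst (Sum.elim (fun a => Term.var (Sum.inl a))
      (fun i => succT (Term.var (Sum.inr i))))
  let step : arith.Formula (Fin k) := formulaIAllsOld id (χ ⟹ χS)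
  let concl : arith.Formula (Fin k) := formulaIAllsOld id χ
  formulaIAllsOld (fun a => (Sum.inr a : Empty ⊕ Fin k)) ((χ0 ⊓ step) ⟹ concl)

/-- Peano Arithmetic: Robinson arithmetic together with the induction axioms
for all formulas. -/
noncomputable def PA : arith.Theory :=
  RobinsonQ ∪ {A | ∃ (k : ℕ) (φ : arith.BoundedFormula Empty (k + 1)), A = indAx φ}

/-- The bounded universal quantifier: `∀x ≤ t, φ`. -/
def bdAllQ {k : ℕ} (t : arith.Term (Empty ⊕ Fin k))
    (φ : arith.BoundedFormula Empty (k + 1)) : arith.BoundedFormula Empty k :=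
  (leF (Term.var (Sum.inr (Fin.last k))) (t.relabel (Sum.map id Fin.castSucc)) ⟹ φ).all

/-- The bounded existential quantifier: `∃x ≤ t, φ`. -/
def bdExQ {k : ℕ} (t : arith.Term (Empty ⊕ Fin k))
    (φ : arith.BoundedFormula Empty (k + 1)) : arith.BoundedFormula Empty k :=
  (leF (Term.var (Sum.inr (Fin.last k))) (t.relabel (Sum.map id Fin.castSucc)) ⊓ φ).ex

/-- `Δ₀` (bounded) formulas: built from quantifier-free formulas by propositional
connectives and bounded quantifiers. -/
inductive IsDelta0 : ∀ {k : ℕ}, arith.BoundedFormula Empty k → Prop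
  | of_isQF {k} {φ : arith.BoundedFormula Empty k} : φ.IsQF → IsDelta0 φ
  | imp {k} {φ ψ : arith.BoundedFormula Empty k} :
      IsDelta0 φ → IsDelta0 ψ → IsDelta0 (φ.imp ψ)
  | bdAll {k} (t : arith.Term (Empty ⊕ Fin k)) {φ : arith.BoundedFormula Empty (k + 1)} :
      IsDelta0 φ → IsDelta0 (bdAllQ t φ)
  | bdEx {k} (t : arith.Term (Empty ⊕ Fin k)) {φ : arith.BoundedFormula Empty (k + 1)} :
      IsDelta0 φ → IsDelta0 (bdExQ t φ)

mutual
  /-- `Σ_n` formulas of the arithmetical hierarchy. -/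
  inductive IsSigmaFm : ℕ → ∀ {k : ℕ}, arith.BoundedFormula Empty k → Prop
    | of_delta0 {n k} {φ : arith.BoundedFormula Empty k} : IsDelta0 φ → IsSigmaFm n φ
    | of_pi {n k} {φ : arith.BoundedFormula Empty k} : IsPiFm n φ → IsSigmaFm (n + 1) φ
    | ex {n k} {φ : arith.BoundedFormula Empty (k + 1)} :
        IsSigmaFm (n + 1) φ → IsSigmaFm (n + 1) φ.ex

  /-- `Π_n` formulas of the arithmetical hierarchy. -/
  inductive IsPiFm : ℕ → ∀ {k : ℕ}, arith.BoundedFormula Empty k → Prop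
    | of_delta0 {n k} {φ : arith.BoundedFormula Empty k} : IsDelta0 φ → IsPiFm n φ
    | of_sigma {n k} {φ : arith.BoundedFormula Empty k} : IsSigmaFm n φ → IsPiFm (n + 1) φ
    | all {n k} {φ : arith.BoundedFormula Empty (k + 1)} :
        IsPiFm (n + 1) φ → IsPiFm (n + 1) φ.all
end

/-- `IΣ_n`: Robinson arithmetic together with induction for `Σ_n` formulas. -/
noncomputable def ISigma (n : ℕ) : arith.Theory :=
  RobinsonQ ∪
    {A | ∃ (k : ℕ) (φ : arith.BoundedFormula Empty (k + 1)), IsSigmaFm n φ ∧ A = indAx φ}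

/-- `Pr` is a standard provability predicate for the theory `T`: it satisfies the three
Hilbert–Bernays–Löb derivability conditions and, for every sentence `A`,
`T ⊢ A` iff `Pr(⌜A⌝)` holds in the standard model ℕ. -/
def IsStandardProvability (T : arith.Theory) (Pr : arith.BoundedFormula Empty 1) : Prop :=
  (∀ A : arith.Sentence, Proves T A → Proves T (applyCode Pr A)) ∧
  (∀ A B : arith.Sentence,
    Proves T (applyCode Pr (A ⟹ B) ⟹ (applyCode Pr A ⟹ applyCode Pr B))) ∧
  (∀ A : arith.Sentence,
    Proves T (applyCode Pr A ⟹ applyCode Pr (applyCode Pr A))) ∧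
  (∀ A : arith.Sentence, Proves T A ↔ TrueInN (applyCode Pr A))

/-- The consistency statement `Con = ¬Pr(⌜0=1⌝)` associated with a provability
predicate `Pr`. -/
def conOf (Pr : arith.BoundedFormula Empty 1) : arith.Sentence :=
  ∼(applyCode Pr ((zeroT : arith.Term (Empty ⊕ Fin 0)) =' succT zeroT))

/-- ω-consistency: there is no formula `φ(x)` such that `T ⊢ ∃x ¬φ(x)` while `T ⊢ φ(n̄)`
for every natural number `n`. -/
def OmegaConsistent (T : arith.Theory) : Prop :=
  ¬ ∃ φ : arith.BoundedFormula Empty 1,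
    Proves T (∼φ).ex ∧ ∀ n : ℕ, Proves T (substSingle φ (numeral n))

theorem IsStandardProvability.trueInN_applyCode_iff {T : arith.Theory}
    {Pr : arith.BoundedFormula Empty 1} (hPr : IsStandardProvability T Pr) (A : arith.Sentence) :
    TrueInN (applyCode Pr A) ↔ Proves T A :=
  (hPr.2.2.2 A).symm

theorem IsStandardProvability.trueInN_iff_not_applyCode_iff {T : arith.Theory}
    {Pr : arith.BoundedFormula Empty 1} (hPr : IsStandardProvability T Pr) (A : arith.Sentence) :
    TrueInN (A ⇔ ∼(applyCode Pr A)) ↔ (TrueInN A ↔ ¬ Proves T A) := by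
  rw [← hPr.trueInN_applyCode_iff]
  simp only [TrueInN, Sentence.realize_iff, Sentence.realize_not]

/-- **Second half of Theorem 2 of Lajevardi–Salehi 2021.**  If the particular formula
`¬Pr_T(x)` has a fixed point in `T` that is false in ℕ, then `T` is unsound (for `T` a
consistent, recursively axiomatizable extension of Robinson arithmetic `Q`). -/
theorem unsound_of_negPr_false_fixed_point
    (T : arith.Theory) (hQ : Extends T RobinsonQ)
    (hcons : Consistent T) (hrec : RecursivelyAxiomatizable T)
    (Pr : arith.BoundedFormula Empty 1) (hPr : IsStandardProvability T Pr)
    (A : arith.Sentence) (hfix : Proves T (A ⇔ ∼(applyCode Pr A)))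
    (hfalse : ¬ TrueInN A) :
    Unsound T := by
  by_cases hA : Proves T A
  · exact ⟨A, hA, hfalse⟩
  · have hfix_false : ¬ TrueInN (A ⇔ ∼(applyCode Pr A)) := fun h =>
      hfalse (((hPr.trueInN_iff_not_applyCode_iff A).mp h).mpr hA)
    exact ⟨_, hfix, hfix_false⟩
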